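/- Let F = GF(2^n) with n odd and n not divisible by 3, and let f(x) = Inv(x) for x ∉ {0,1}, f(0) = 1, f(1) = 0, where Inv(x) = x^(2^n-2). Then the second-order zero differential uniformity of f equals 4; that is, max over a, b ∈ F with ab(a+b) ≠ 0 of #{x : f(x+a+b)+f(x+a)+f(x+b)+f(x)=0} equals 4. -/

import Mathlib

/-!
Off the few points where the transposition matters, `f` is the inverse map, whose second-order
difference `a b (a + b) / (x (x + a) (x + b) (x + a + b))` never vanishes. Hence every solution
lies in `V = {0, a, b, a + b}` or in `1 + V`, and since the solution set is stable under
translation by `V`, it is a union of these cosets. If `1 ∉ V`, the two cosets can both be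
solutions only when `a + b` is a root of `X ^ 3 + X + 1`, which has no root because `3 ∤ n`.
So the solution set is empty or one coset, of size 4. The coset `1 + V` is a solution set iff
`a ^ 2 + a b + b ^ 2 = 1`, and such `a, b` exist: every element is a square and, `n` being odd,
`X ^ 2 + X + 1` has no root.
-/

open Finset

theorem orderOf_two_dvd_of_dvd_two_pow_sub_one {p n : ℕ} (h : p ∣ 2 ^ n - 1) :
    orderOf (2 : ZMod p) ∣ n := by
  apply orderOf_dvd_of_pow_eq_one
  have h' := (ZMod.natCast_eq_zero_iff _ p).mpr h
  rw [Nat.cast_sub Nat.one_le_two_pow] at h'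
  push_cast at h'
  exact sub_eq_zero.mp h'

section FiniteField

variable {F : Type*} [Field F] [Fintype F]

theorem pow_card_sub_two_eq_inv {x : F} (hx : x ≠ 0) :
    x ^ (Fintype.card F - 2) = x⁻¹ := by
  refine eq_inv_of_mul_eq_one_left ?_
  have := Fintype.one_lt_card (α := F)
  rw [← pow_succ, show Fintype.card F - 2 + 1 = Fintype.card F - 1 by omega,
    FiniteField.pow_card_sub_one_eq_one x hx]

theorem charP_two_of_card_eq_two_pow {n : ℕ} (hn : n ≠ 0) (hF : Fintype.card F = 2 ^ n) :
    CharP F 2 := by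
  rw [CharP.charP_iff_prime_eq_zero Nat.prime_two]
  have h := FiniteField.cast_card_eq_zero F
  rw [hF, Nat.cast_pow, Nat.cast_ofNat] at h
  exact pow_eq_zero_iff hn |>.mp h

theorem dvd_card_sub_one_of_pow_eq_one {p : ℕ} [Fact p.Prime] {x : F} (hx : x ^ p = 1)
    (hx1 : x ≠ 1) : p ∣ Fintype.card F - 1 := by
  have hx0 : x ≠ 0 := by
    rintro rfl
    simp [(Fact.out : p.Prime).ne_zero] at hx
  rw [← orderOf_eq_prime hx hx1]
  exact orderOf_dvd_of_pow_eq_one (FiniteField.pow_card_sub_one_eq_one x hx0)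

variable [CharP F 2] {n : ℕ} (hF : Fintype.card F = 2 ^ n)
include hF

theorem sq_add_add_one_ne_zero (hodd : Odd n) (w : F) : w ^ 2 + w + 1 ≠ 0 := by
  intro hw
  -- `w` would be a primitive cube root of unity, but `3 ∤ 2 ^ n - 1` for odd `n`.
  have h3 : 3 ∣ Fintype.card F - 1 :=
    dvd_card_sub_one_of_pow_eq_one (x := w) (by grind) (by rintro rfl; grind)
  have h2 := orderOf_two_dvd_of_dvd_two_pow_sub_one (hF ▸ h3)
  rw [orderOf_eq_prime (p := 2) (by decide) (by decide)] at h2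
  exact Nat.not_even_iff_odd.mpr hodd (even_iff_two_dvd.mpr h2)

theorem cube_add_add_one_ne_zero (h3 : ¬3 ∣ n) (s : F) : s ^ 3 + s + 1 ≠ 0 := by
  intro hs
  -- In characteristic `2`, `s` would be a primitive seventh root of unity.
  have : Fact (Nat.Prime 7) := ⟨by norm_num⟩
  have h7 : 7 ∣ Fintype.card F - 1 :=
    dvd_card_sub_one_of_pow_eq_one (x := s) (by grind) (by rintro rfl; grind)
  have h3' := orderOf_two_dvd_of_dvd_two_pow_sub_one (hF ▸ h7)
  rw [orderOf_eq_prime (p := 3) (by decide) (by decide)] at h3'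
  exact h3 h3'

end FiniteField

def secondDiff {G M : Type*} [Add G] [Add M] (f : G → M) (a b x : G) : M :=
  f (x + a + b) + f (x + a) + f (x + b) + f x

/-- In characteristic `2` this is the additive subgroup generated by `a` and `b`. -/
def spanPair {R : Type*} [Zero R] [Add R] [DecidableEq R] (a b : R) : Finset R :=
  {0, a, b, a + b}

def swapInv {F : Type*} [Field F] [DecidableEq F] (x : F) : F :=
  (Equiv.swap (0 : F) 1 x)⁻¹

theorem secondDiff_comm {G M : Type*} [AddCommSemigroup G] [AddCommSemigroup M] (f : G → M)
    (a b x : G) : secondDiff f a b x = secondDiff f b a x := by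
  simp only [secondDiff, add_right_comm x a b]
  ac_rfl

section CharTwo

variable {R M : Type*} [CommRing R] [CharP R 2] [AddCommSemigroup M]

theorem secondDiff_add_left (f : R → M) (a b x : R) :
    secondDiff f a b (x + a) = secondDiff f a b x := by
  simp only [secondDiff, CharTwo.add_cancel_right, add_right_comm x a b]
  ac_rfl

variable [DecidableEq R] {a b : R}

theorem secondDiff_add_of_mem_spanPair (f : R → M) (x : R) {v : R} (hv : v ∈ spanPair a b) :
    secondDiff f a b (x + v) = secondDiff f a b x := by
  simp only [spanPair, mem_insert, mem_singleton] at hv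
  rcases hv with rfl | rfl | rfl | rfl
  · rw [add_zero]
  · exact secondDiff_add_left f _ b x
  · rw [secondDiff_comm, secondDiff_add_left, secondDiff_comm]
  · rw [← add_assoc, secondDiff_comm, secondDiff_add_left, secondDiff_comm,
      secondDiff_add_left]

theorem add_mem_spanPair {v w : R} (hv : v ∈ spanPair a b) (hw : w ∈ spanPair a b) :
    v + w ∈ spanPair a b := by
  simp only [spanPair, mem_insert, mem_singleton] at *
  rcases hv with rfl | rfl | rfl | rfl <;> rcases hw with rfl | rfl | rfl | rfl <;> grind

theorem card_spanPair (hab : a * b * (a + b) ≠ 0) : #(spanPair a b) = 4 := by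
  have ha : a ≠ 0 := by rintro rfl; simp at hab
  have hb : b ≠ 0 := by rintro rfl; simp at hab
  have hs : a + b ≠ 0 := by intro h; simp [h] at hab
  rw [spanPair, card_eq_four]
  exact ⟨0, a, b, a + b, by grind, by grind, by grind, by grind, by grind, by grind, rfl⟩

end CharTwo

theorem secondDiff_inv {F : Type*} [Field F] [CharP F 2] {a b x : F} (h0 : x ≠ 0)
    (ha : x + a ≠ 0) (hb : x + b ≠ 0) (hab : x + a + b ≠ 0) :
    secondDiff (·⁻¹) a b x = a * b * (a + b) / (x * (x + a) * (x + b) * (x + a + b)) := by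
  have h2 := CharTwo.two_eq_zero (R := F)
  simp only [secondDiff]
  field_simp
  linear_combination (3 * a * b * x + 3 * a * x ^ 2 + 3 * b * x ^ 2 + 2 * x ^ 3 + a ^ 2 * x
    + b ^ 2 * x) * h2

section SwapInv

variable {F : Type*} [Field F] [DecidableEq F] {a b x : F}

@[simp] theorem swapInv_zero : swapInv (0 : F) = 1 := by simp [swapInv]

@[simp] theorem swapInv_one : swapInv (1 : F) = 0 := by simp [swapInv]

theorem swapInv_of_ne (h0 : x ≠ 0) (h1 : x ≠ 1) : swapInv x = x⁻¹ := by
  rw [swapInv, Equiv.swap_apply_of_ne_of_ne h0 h1]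

theorem swapInv_eq_ite_pow [Fintype F] (x : F) :
    swapInv x = if x = 0 then 1 else if x = 1 then 0 else x ^ (Fintype.card F - 2) := by
  split_ifs with h0 h1
  · simp [h0]
  · simp [h1]
  · rw [swapInv_of_ne h0 h1, pow_card_sub_two_eq_inv h0]

variable [CharP F 2]

theorem mem_spanPair_or_add_one_mem_of_secondDiff_swapInv_eq_zero (hab : a * b * (a + b) ≠ 0)
    (hx : secondDiff swapInv a b x = 0) : x ∈ spanPair a b ∨ x + 1 ∈ spanPair a b := by
  by_contra! h
  simp only [spanPair, mem_insert, mem_singleton, not_or] at h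
  have h0 : x ≠ 0 := h.1.1
  have hx' : secondDiff swapInv a b x = secondDiff (·⁻¹) a b x := by
    simp only [secondDiff]
    rw [swapInv_of_ne (by grind) (by grind), swapInv_of_ne (by grind) (by grind),
      swapInv_of_ne (by grind) (by grind), swapInv_of_ne h0 (by grind)]
  rw [hx', secondDiff_inv h0 (by grind) (by grind) (by grind), div_eq_zero_iff] at hx
  exact hx.elim hab fun h ↦ by simp only [mul_eq_zero] at h; grind

theorem secondDiff_swapInv_zero (hab : a * b * (a + b) ≠ 0) (h1 : 1 ∉ spanPair a b) :
    secondDiff swapInv a b 0 = 0 ↔ a ^ 2 + a * b + b ^ 2 = a * b * (a + b) := by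
  simp only [mul_ne_zero_iff] at hab
  simp only [spanPair, mem_insert, mem_singleton, not_or] at h1
  simp only [secondDiff, zero_add, swapInv_zero]
  rw [swapInv_of_ne (by grind) (by grind), swapInv_of_ne (by grind) (by grind),
    swapInv_of_ne (by grind) (by grind)]
  field_simp
  grind

theorem secondDiff_swapInv_one (hab : a * b * (a + b) ≠ 0) (h1 : 1 ∉ spanPair a b) :
    secondDiff swapInv a b 1 = 0 ↔ a ^ 2 + a * b + b ^ 2 = 1 := by
  simp only [mul_ne_zero_iff] at hab
  simp only [spanPair, mem_insert, mem_singleton, not_or] at h1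
  simp only [secondDiff, swapInv_one, add_zero]
  rw [swapInv_of_ne (by grind) (by grind), swapInv_of_ne (by grind) (by grind),
    swapInv_of_ne (by grind) (by grind)]
  field_simp
  grind

theorem one_notMem_spanPair (hab : a * b * (a + b) ≠ 0) (h : a ^ 2 + a * b + b ^ 2 = 1) :
    1 ∉ spanPair a b := by
  simp only [spanPair, mem_insert, mem_singleton, not_or]
  refine ⟨one_ne_zero, ?_, ?_, ?_⟩ <;> intro h1 <;> apply hab <;> grind

theorem secondDiff_swapInv_one_ne_zero (hcubic : ∀ s : F, s ^ 3 + s + 1 ≠ 0)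
    (hab : a * b * (a + b) ≠ 0) (h1 : 1 ∉ spanPair a b) (h0 : secondDiff swapInv a b 0 = 0) :
    secondDiff swapInv a b 1 ≠ 0 := by
  rw [secondDiff_swapInv_zero hab h1] at h0
  rw [Ne, secondDiff_swapInv_one hab h1]
  intro h
  exact hcubic (a + b) (by grind)

variable {y : F}

theorem add_mem_spanPair_of_mem_of_add_one_mem (hcubic : ∀ s : F, s ^ 3 + s + 1 ≠ 0)
    (hab : a * b * (a + b) ≠ 0) (hx : secondDiff swapInv a b x = 0)
    (hy : secondDiff swapInv a b y = 0) (hxV : x ∈ spanPair a b) (hyV : y + 1 ∈ spanPair a b) :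
    x + y ∈ spanPair a b := by
  by_cases h1 : 1 ∈ spanPair a b
  · have := add_mem_spanPair (add_mem_spanPair hxV hyV) h1
    rwa [add_assoc, CharTwo.add_cancel_right] at this
  · refine absurd ?_ (secondDiff_swapInv_one_ne_zero hcubic hab h1 ?_)
    · rwa [← secondDiff_add_of_mem_spanPair swapInv y hyV, CharTwo.add_cancel_left] at hy
    · rwa [← secondDiff_add_of_mem_spanPair swapInv x hxV, CharTwo.add_self_eq_zero] at hx

theorem add_mem_spanPair_of_secondDiff_swapInv_eq_zero (hcubic : ∀ s : F, s ^ 3 + s + 1 ≠ 0)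
    (hab : a * b * (a + b) ≠ 0) (hx : secondDiff swapInv a b x = 0)
    (hy : secondDiff swapInv a b y = 0) : x + y ∈ spanPair a b := by
  rcases mem_spanPair_or_add_one_mem_of_secondDiff_swapInv_eq_zero hab hx with hxV | hxV <;>
    rcases mem_spanPair_or_add_one_mem_of_secondDiff_swapInv_eq_zero hab hy with hyV | hyV
  · exact add_mem_spanPair hxV hyV
  · exact add_mem_spanPair_of_mem_of_add_one_mem hcubic hab hx hy hxV hyV
  · rw [add_comm]
    exact add_mem_spanPair_of_mem_of_add_one_mem hcubic hab hy hx hyV hxV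
  · have := add_mem_spanPair hxV hyV
    rwa [show x + 1 + (y + 1) = x + y by grind] at this

variable [Fintype F]

theorem filter_secondDiff_swapInv_eq_zero (hcubic : ∀ s : F, s ^ 3 + s + 1 ≠ 0)
    (hab : a * b * (a + b) ≠ 0) (hx : secondDiff swapInv a b x = 0) :
    ({y | secondDiff swapInv a b y = 0} : Finset F) = (spanPair a b).image (x + ·) := by
  ext y
  simp only [mem_filter, mem_univ, true_and, mem_image]
  constructor
  · intro hy
    exact ⟨x + y, add_mem_spanPair_of_secondDiff_swapInv_eq_zero hcubic hab hx hy,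
      CharTwo.add_cancel_left x y⟩
  · rintro ⟨v, hv, rfl⟩
    rwa [secondDiff_add_of_mem_spanPair _ _ hv]

theorem card_filter_secondDiff_swapInv_eq_zero (hcubic : ∀ s : F, s ^ 3 + s + 1 ≠ 0)
    (hab : a * b * (a + b) ≠ 0) (hx : secondDiff swapInv a b x = 0) :
    #({y | secondDiff swapInv a b y = 0} : Finset F) = 4 := by
  rw [filter_secondDiff_swapInv_eq_zero hcubic hab hx,
    card_image_of_injective _ (add_right_injective x), card_spanPair hab]

theorem exists_secondDiff_swapInv_one_eq_zero (hcard : 2 < Fintype.card F)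
    (hquad : ∀ w : F, w ^ 2 + w + 1 ≠ 0) :
    ∃ a b : F, a * b * (a + b) ≠ 0 ∧ secondDiff swapInv a b 1 = 0 := by
  obtain ⟨s, -, hs⟩ := exists_mem_notMem_of_card_lt_card (s := {0, 1}) (t := univ)
    (card_le_two.trans_lt (card_univ (α := F) ▸ hcard))
  simp only [mem_insert, mem_singleton, not_or] at hs
  obtain ⟨r, hr⟩ := isSquare_of_charTwo' (s ^ 2 + s + 1)⁻¹
  have hr0 : r ≠ 0 := by rintro rfl; simp [hquad s] at hr
  have hab : r * (r * s) * (r + r * s) ≠ 0 := by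
    simp only [mul_ne_zero_iff]
    grind
  have hE : r ^ 2 + r * (r * s) + (r * s) ^ 2 = 1 := by
    rw [show r ^ 2 + r * (r * s) + (r * s) ^ 2 = r * r * (s ^ 2 + s + 1) by ring, ← hr,
      inv_mul_cancel₀ (hquad s)]
  exact ⟨r, r * s, hab, (secondDiff_swapInv_one hab (one_notMem_spanPair hab hE)).2 hE⟩

end SwapInv

theorem stmt_10 {F : Type*} [Field F] [Fintype F] [DecidableEq F] {n : ℕ}
    (hn : 1 < n) (hodd : Odd n) (h3 : ¬ (3 ∣ n)) (hF : Fintype.card F = 2 ^ n)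
    (f : F → F)
    (hf : f = fun x => if x = 0 then 1 else if x = 1 then 0 else x ^ (2 ^ n - 2)) :
    (∀ a b : F, a * b * (a + b) ≠ 0 →
      (Finset.univ.filter fun x : F =>
        f (x + a + b) + f (x + a) + f (x + b) + f x = 0).card ≤ 4) ∧
    (∃ a b : F, a * b * (a + b) ≠ 0 ∧
      (Finset.univ.filter fun x : F =>
        f (x + a + b) + f (x + a) + f (x + b) + f x = 0).card = 4) := by
  have : CharP F 2 := charP_two_of_card_eq_two_pow (by omega) hF
  have hcubic := cube_add_add_one_ne_zero hF h3
  obtain rfl : f = swapInv := by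
    rw [hf, ← hF]
    funext x
    exact (swapInv_eq_ite_pow x).symm
  refine ⟨fun a b hab ↦ ?_, ?_⟩
  · obtain hS | ⟨x, hx⟩ :=
      (univ.filter fun x : F ↦ secondDiff swapInv a b x = 0).eq_empty_or_nonempty
    · exact (card_eq_zero.mpr hS).trans_le (by norm_num)
    · exact (card_filter_secondDiff_swapInv_eq_zero hcubic hab (mem_filter.mp hx).2).le
  · have hcard : 2 < Fintype.card F :=
      hF ▸ (Nat.pow_lt_pow_right (by norm_num) hn : 2 ^ 1 < 2 ^ n)
    obtain ⟨a, b, hab, h1⟩ :=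
      exists_secondDiff_swapInv_one_eq_zero hcard (sq_add_add_one_ne_zero hF hodd)
    exact ⟨a, b, hab, card_filter_secondDiff_swapInv_eq_zero hcubic hab h1⟩
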